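/- arXiv:1507.02556 — 2 statements merged into one kernel-verified Lean document; each statement's English description precedes it below -/
import Mathlib

section
/- Let (R, m) be a Noetherian local ring and let a₁, …, a_d ∈ m be an R-regular sequence generating an ideal Q with Q ⊆ m². Then the multiplication map σ : m ⊗_R Q → mQ, x ⊗ y ↦ xy, has kernel contained in m·(m ⊗_R Q); consequently μ_R(mQ) = d·μ_R(m), where μ_R denotes the minimal number of generators. -/
/-!
Every element of `𝔪 ⊗ Q` is a sum `∑ xᵢ ⊗ aᵢ`, and every element of `𝔪Q` is a sum `∑ xᵢ aᵢ`
with `xᵢ ∈ 𝔪`. Since `a` is regular, a relation `∑ xᵢ aᵢ = 0` forces `xᵢ ∈ Q ⊆ 𝔪²`. This gives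
the statement about the kernel, and it says that the surjection `𝔪^d → 𝔪Q`, `x ↦ ∑ xᵢ aᵢ`, has
kernel inside `𝔪 · 𝔪^d`; by Nakayama it therefore preserves the minimal number of generators,
so `μ(𝔪Q) = μ(𝔪^d) = d · μ(𝔪)`.
-/

open IsLocalRing TensorProduct

noncomputable section

/-- The minimal number of generators of a module. -/
def mu (R : Type) [CommRing R] (M : Type) [AddCommGroup M] [Module R M] : ℕ :=
  sInf {n : ℕ | ∃ s : Finset M, s.card = n ∧ Submodule.span R (s : Set M) = ⊤}

/-- The length of a module (as a natural number), defined as the Krull dimension of its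
lattice of submodules. -/
def lengthNat (R : Type) [CommRing R] (M : Type) [AddCommGroup M] [Module R M] : ℕ :=
  (WithBot.unbotD 0 (Order.krullDim (Submodule R M))).toNat

/-- The (Krull) dimension of a module. -/
def moduleDim (R : Type) [CommRing R] (M : Type) [AddCommGroup M] [Module R M] : WithBot ℕ∞ :=
  ringKrullDim (R ⧸ Module.annihilator R M)

open Filter in
/-- The Hilbert–Samuel multiplicity `e(J, M)` of a module `M` with respect to an ideal `J`. -/
def eMult (R : Type) [CommRing R] (J : Ideal R) (M : Type) [AddCommGroup M] [Module R M] : ℕ :=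
  sInf {e : ℕ | ∃ d : ℕ, moduleDim R M = (d : ℕ∞) ∧
    Tendsto (fun n : ℕ =>
        ((d.factorial : ℝ) * (lengthNat R (M ⧸ (J ^ n • ⊤ : Submodule R M)))) / (n : ℝ) ^ d)
      atTop (nhds (e : ℝ))}

/-- A parameter ideal of a local ring: an ideal generated by a system of parameters. -/
def Ideal.IsParameterIdeal {R : Type} [CommRing R] [IsLocalRing R] (Q : Ideal R) : Prop :=
  ∃ (d : ℕ) (a : Fin d → R), ringKrullDim R = (d : ℕ) ∧ Q = Ideal.span (Set.range a) ∧
    Q ≤ maximalIdeal R ∧ maximalIdeal R ≤ Q.radical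

/-- A subsystem of parameters: a family extendable to a full system of parameters. -/
def IsSubsystemOfParameters {R : Type} [CommRing R] [IsLocalRing R] {r : ℕ}
    (a : Fin r → R) : Prop :=
  ∃ (d : ℕ) (hrd : r ≤ d) (b : Fin d → R), ringKrullDim R = (d : ℕ) ∧
    (∀ i : Fin r, b (Fin.castLE hrd i) = a i) ∧
    (Ideal.span (Set.range b)).IsParameterIdeal

/-- A Noetherian local ring is Cohen–Macaulay iff it admits a regular sequence in the maximal
ideal whose length is the Krull dimension. -/
def IsCohenMacaulayLocalRing (R : Type) [CommRing R] [IsLocalRing R] : Prop :=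
  IsNoetherianRing R ∧
    ∃ (d : ℕ) (a : Fin d → R), ringKrullDim R = (d : ℕ) ∧
      (∀ i, a i ∈ maximalIdeal R) ∧ RingTheory.Sequence.IsRegular R (List.ofFn a)

open CategoryTheory in
/-- The `i`-th Ext module of two modules over `R`. -/
def extGp (R : Type) [CommRing R] (M N : Type) [AddCommGroup M] [Module R M]
    [AddCommGroup N] [Module R N] (i : ℕ) : ModuleCat R :=
  ((Ext R (ModuleCat R) i).obj (Opposite.op (ModuleCat.of R M))).obj (ModuleCat.of R N)

/-- A canonical module of a (Cohen–Macaulay) Noetherian local ring `R`, characterized by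
`Ext^i(k, K) = 0` for `i ≠ d` and `Ext^d(k, K) ≅ k`, where `d = dim R`. -/
def IsCanonicalModule (R : Type) [CommRing R] [IsLocalRing R]
    (M : Type) [AddCommGroup M] [Module R M] : Prop :=
  Module.Finite R M ∧ ∃ d : ℕ, ringKrullDim R = (d : ℕ) ∧
    (∀ i : ℕ, i ≠ d → Subsingleton (extGp R (ResidueField R) M i)) ∧
    Nonempty ((extGp R (ResidueField R) M d) ≃ₗ[R] ResidueField R)

/-- Gorenstein local ring. -/
def IsGorensteinLocalRing (R : Type) [CommRing R] [IsLocalRing R] : Prop :=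
  IsNoetherianRing R ∧ IsCanonicalModule R R

/-- A commutative ring is Gorenstein if all its localizations at primes are Gorenstein
local rings. -/
def IsGorensteinRing (S : Type) [CommRing S] : Prop :=
  ∀ (P : Ideal S) (hP : P.IsPrime), letI := hP; IsGorensteinLocalRing (Localization.AtPrime P)

/-- Regular local ring: Noetherian local and the maximal ideal is generated by `dim R`
elements. -/
def IsRegularLocalRingP (R : Type) [CommRing R] [IsLocalRing R] : Prop :=
  IsNoetherianRing R ∧ ringKrullDim R = (mu R (maximalIdeal R) : ℕ)

/-- The Cohen–Macaulay type: the minimal number of generators of a canonical module. -/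
def CMtype (R : Type) [CommRing R] [IsLocalRing R] : ℕ :=
  sInf {t : ℕ | ∃ K : ModuleCat.{0} R, IsCanonicalModule R K ∧ mu R K = t}

/-- Almost Gorenstein local ring (Goto–Takahashi–Taniguchi): there is an embedding
`R ↪ K_R` into a canonical module whose cokernel `C` satisfies `μ(C) = e⁰_𝔪(C)`. -/
def IsAlmostGorensteinLocalRing (R : Type) [CommRing R] [IsLocalRing R] : Prop :=
  IsNoetherianRing R ∧ IsCohenMacaulayLocalRing R ∧
  ∃ (K : ModuleCat.{0} R), IsCanonicalModule R K ∧
    ∃ f : R →ₗ[R] K, Function.Injective f ∧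
      mu R (K ⧸ LinearMap.range f) = eMult R (maximalIdeal R) (K ⧸ LinearMap.range f)

/-- `pd_R M ≤ n`, via vanishing of Ext. -/
def projDimLE (R : Type) [CommRing R] (M : Type) [AddCommGroup M] [Module R M] (n : ℕ) : Prop :=
  ∀ (N : ModuleCat.{0} R) (i : ℕ), n < i → Subsingleton (extGp R M N i)

/-- The ideal `J` contains a regular sequence of length `g`. -/
def hasGradeGE (R : Type) [CommRing R] (J : Ideal R) (g : ℕ) : Prop :=
  ∃ a : Fin g → R, (∀ i, a i ∈ J) ∧ RingTheory.Sequence.IsRegular R (List.ofFn a)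

/-- The ideal `J` has grade `g`. -/
def hasGrade (R : Type) [CommRing R] (J : Ideal R) (g : ℕ) : Prop :=
  hasGradeGE R J g ∧ ¬ hasGradeGE R J (g + 1)

/-- `J` is a perfect ideal of grade `g`: `grade J = pd_R (R/J) = g`. -/
def IsPerfectIdealOfGrade (R : Type) [CommRing R] (J : Ideal R) (g : ℕ) : Prop :=
  hasGrade R J g ∧ projDimLE R (R ⧸ J) g ∧ ∀ m : ℕ, projDimLE R (R ⧸ J) m → g ≤ m

end

lemma mu_eq_spanFinrank_top (R : Type) [CommRing R] (M : Type) [AddCommGroup M] [Module R M] :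
    mu R M = (⊤ : Submodule R M).spanFinrank := by
  rw [Submodule.spanFinrank_eq_iInf, mu, iInf, Set.range]
  congr 1
  ext n
  simp only [Set.mem_ofPred_eq, Subtype.exists, exists_prop]
  grind

namespace TensorProduct

variable {R M N ι : Type*} [CommRing R] [AddCommGroup M] [Module R M] [AddCommGroup N] [Module R N]
  [Fintype ι]

lemma exists_eq_sum_tmul_of_span_eq_top {v : ι → N} (hv : Submodule.span R (Set.range v) = ⊤)
    (t : M ⊗[R] N) : ∃ x : ι → M, t = ∑ i, x i ⊗ₜ v i := by
  induction t using TensorProduct.induction_on with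
  | zero => exact ⟨0, by simp⟩
  | tmul m n =>
    obtain ⟨c, rfl⟩ :=
      (Submodule.mem_span_range_iff_exists_fun R).mp (hv ▸ Submodule.mem_top (x := n))
    exact ⟨fun i => c i • m, by simp [tmul_sum, smul_tmul]⟩
  | add t₁ t₂ h₁ h₂ =>
    obtain ⟨x₁, rfl⟩ := h₁
    obtain ⟨x₂, rfl⟩ := h₂
    exact ⟨x₁ + x₂, by simp [add_tmul, Finset.sum_add_distrib]⟩

end TensorProduct

lemma Submodule.mem_smul_top_pi {R M ι : Type*} [CommRing R] [AddCommGroup M] [Module R M]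
    [Fintype ι] [DecidableEq ι] {I : Ideal R} {x : ι → M}
    (hx : ∀ i, x i ∈ I • (⊤ : Submodule R M)) : x ∈ I • (⊤ : Submodule R (ι → M)) := by
  rw [← Finset.univ_sum_single x]
  exact sum_mem fun i _ => smul_top_le_comap_smul_top I (LinearMap.single R (fun _ => M) i) (hx i)

namespace Ideal

variable {R : Type*} [CommRing R]

lemma ofList_ofFn {d : ℕ} (a : Fin d → R) : ofList (List.ofFn a) = span (Set.range a) := by
  simp [ofList, List.mem_ofFn, Set.range]

lemma mem_of_mul_mem_of_isSMulRegular_quotient {I : Ideal R} {b x : R}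
    (hb : IsSMulRegular (R ⧸ I) b) (hx : x * b ∈ I) : x ∈ I := by
  rw [← Quotient.eq_zero_iff_mem] at hx ⊢
  exact hb (by simpa [Algebra.smul_def, mul_comm] using hx)

end Ideal

namespace RingTheory.Sequence.IsWeaklyRegular

variable {R : Type*} [CommRing R]

theorem mem_span_of_sum_mul_eq_zero :
    ∀ {d : ℕ} {a : Fin d → R}, IsWeaklyRegular R (List.ofFn a) →
      ∀ {x : Fin d → R}, ∑ i, x i * a i = 0 → ∀ i, x i ∈ Ideal.span (Set.range a)
  | 0, _, _, _, _, i => i.elim0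
  | e + 1, a, ha, x, hx, i => by
    set b := a (Fin.last e)
    set I := Ideal.span (Set.range (Fin.init a))
    have hI : I ≤ Ideal.span (Set.range a) :=
      Ideal.span_mono (Set.range_comp_subset_range Fin.castSucc a)
    rw [List.ofFn_succ', List.concat_eq_append, isWeaklyRegular_append_iff,
      isWeaklyRegular_singleton_iff, Ideal.ofList_ofFn, smul_eq_mul, Ideal.mul_top] at ha
    obtain ⟨hinit, hb⟩ := ha
    rw [Fin.sum_univ_castSucc] at hx
    -- `b` is regular modulo `I`, so `x_last ∈ I`; writing `x_last = ∑ cⱼ aⱼ` turns the relation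
    -- into one among the first `e` elements.
    have hxb : x (Fin.last e) ∈ I := by
      refine Ideal.mem_of_mul_mem_of_isSMulRegular_quotient hb ?_
      rw [eq_neg_of_add_eq_zero_right hx]
      exact neg_mem <| Ideal.sum_mem _ fun j _ =>
        Ideal.mul_mem_left _ _ (Ideal.subset_span ⟨j, rfl⟩)
    obtain ⟨c, hc⟩ := (Submodule.mem_span_range_iff_exists_fun R).mp hxb
    have hx' : ∑ j, (x j.castSucc + c j * b) * Fin.init a j = 0 := by
      simp only [add_mul, Finset.sum_add_distrib, mul_right_comm _ b, ← Finset.sum_mul]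
      simp only [smul_eq_mul] at hc
      rw [hc]
      simpa [Fin.init] using hx
    induction i using Fin.lastCases with
    | last => exact hI hxb
    | cast j =>
      rw [show x j.castSucc = (x j.castSucc + c j * b) - c j * b by ring]
      exact sub_mem (hI (mem_span_of_sum_mul_eq_zero hinit hx' j))
        (Ideal.mul_mem_left _ _ (Ideal.subset_span ⟨_, rfl⟩))

end RingTheory.Sequence.IsWeaklyRegular

namespace IsLocalRing

variable {R M N : Type*} [CommRing R] [IsLocalRing R] [AddCommGroup M] [Module R M]
  [AddCommGroup N] [Module R N]

lemma spanFinrank_top_eq_finrank_residueField_tensor [Module.Finite R M] :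
    (⊤ : Submodule R M).spanFinrank = Module.finrank (ResidueField R) (ResidueField R ⊗[R] M) := by
  rw [← TensorProduct.spanFinrank_top_eq_of_residueField (⊤ : Submodule R M) Module.Finite.fg_top,
    ← Module.finrank_eq_spanFinrank_of_free (R := ResidueField R)]
  exact (Submodule.topEquiv.baseChange R (ResidueField R) _ _).finrank_eq

lemma spanFinrank_top_pi (ι : Type*) [Fintype ι] [Module.Finite R M] :
    (⊤ : Submodule R (ι → M)).spanFinrank = Fintype.card ι * (⊤ : Submodule R M).spanFinrank := by
  classical
  rw [spanFinrank_top_eq_finrank_residueField_tensor,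
    spanFinrank_top_eq_finrank_residueField_tensor,
    (piRight R (ResidueField R) (ResidueField R) fun _ : ι => M).finrank_eq,
    Module.finrank_pi_fintype, Finset.sum_const, Finset.card_univ, smul_eq_mul]

lemma spanFinrank_top_eq_of_surjective_of_ker_le [Module.Finite R M] {f : M →ₗ[R] N}
    (hf : Function.Surjective f) (hker : LinearMap.ker f ≤ maximalIdeal R • ⊤) :
    (⊤ : Submodule R N).spanFinrank = (⊤ : Submodule R M).spanFinrank := by
  refine le_antisymm ?_ ?_
  · rw [← LinearMap.range_eq_top.mpr hf, LinearMap.range_eq_map]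
    exact Submodule.spanFinrank_map_le_of_fg f Module.Finite.fg_top
  · have : Module.Finite R N := Module.Finite.of_surjective f hf
    obtain ⟨s, hcard, hs⟩ :=
      (Module.Finite.fg_top (R := R) (M := N)).exists_span_finset_card_eq_spanFinrank
    set t := Function.surjInv hf '' s
    have ht : Submodule.span R t = ⊤ := by
      have hmap : (Submodule.span R t).map f = ⊤ := by
        rw [Submodule.map_span, ← Set.image_comp, Function.comp_surjInv, Set.image_id, hs]
      refine top_unique <| Submodule.le_of_le_smul_of_le_jacobson_bot
        (Module.Finite.fg_top (R := R) (M := M)) (maximalIdeal_le_jacobson _) ?_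
      calc ⊤ = ((Submodule.span R t).map f).comap f := by rw [hmap, Submodule.comap_top]
      _ = Submodule.span R t ⊔ LinearMap.ker f := Submodule.comap_map_eq f _
      _ ≤ _ := sup_le_sup_left hker _
    calc (⊤ : Submodule R M).spanFinrank ≤ t.ncard :=
          ht ▸ Submodule.spanFinrank_span_le_ncard_of_finite (s.finite_toSet.image _)
      _ ≤ s.card := (Set.ncard_image_le s.finite_toSet).trans (Set.ncard_coe_finset s).le
      _ = _ := hcard

lemma spanFinrank_range_eq_of_ker_le [Module.Finite R M] (f : M →ₗ[R] N)
    (hker : LinearMap.ker f ≤ maximalIdeal R • ⊤) :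
    (LinearMap.range f).spanFinrank = (⊤ : Submodule R M).spanFinrank := by
  rw [← Submodule.spanFinrank_top, spanFinrank_top_eq_of_surjective_of_ker_le
    f.surjective_rangeRestrict (by rwa [LinearMap.ker_rangeRestrict])]

end IsLocalRing

namespace Ideal

open RingTheory.Sequence

variable {R ι : Type*} [CommRing R] [Fintype ι]

def linearCombination (I : Ideal R) (a : ι → R) : (ι → I) →ₗ[R] R :=
  Fintype.linearCombination R a ∘ₗ I.subtype.compLeft ι

@[simp]
lemma linearCombination_apply (I : Ideal R) (a : ι → R) (x : ι → I) :
    I.linearCombination a x = ∑ i, (x i : R) * a i :=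
  rfl

lemma range_linearCombination (I : Ideal R) (a : ι → R) :
    LinearMap.range (I.linearCombination a) = I * span (Set.range a) := by
  refine le_antisymm ?_ (Ideal.mul_le.mpr fun r hr s hs => ?_)
  · rintro _ ⟨x, rfl⟩
    exact sum_mem _ fun i _ => mul_mem_mul (x i).2 (subset_span ⟨i, rfl⟩)
  · obtain ⟨c, rfl⟩ := (Submodule.mem_span_range_iff_exists_fun R).mp hs
    refine ⟨fun i => c i • (⟨r, hr⟩ : I), ?_⟩
    simp [Finset.mul_sum, mul_left_comm, mul_assoc]

variable {d : ℕ} {a : Fin d → R} {I : Ideal R}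

lemma mem_smul_top_of_linearCombination_eq_zero (ha : IsWeaklyRegular R (List.ofFn a))
    (hI : span (Set.range a) ≤ I ^ 2) {x : Fin d → I} (hx : I.linearCombination a x = 0)
    (i : Fin d) : x i ∈ I • (⊤ : Submodule R I) := by
  rw [Submodule.mem_smul_top_iff, smul_eq_mul, ← sq]
  exact hI (ha.mem_span_of_sum_mul_eq_zero hx i)

lemma ker_linearCombination_le_smul_top (ha : IsWeaklyRegular R (List.ofFn a))
    (hI : span (Set.range a) ≤ I ^ 2) : LinearMap.ker (I.linearCombination a) ≤ I • ⊤ :=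
  fun _ hx => Submodule.mem_smul_top_pi (mem_smul_top_of_linearCombination_eq_zero ha hI hx)

end Ideal

theorem mu_maximalIdeal_mul_parameter_general
    (R : Type) [CommRing R] [IsLocalRing R] [IsNoetherianRing R]
    (d : ℕ) (a : Fin d → R)
    (hreg : RingTheory.Sequence.IsRegular R (List.ofFn a))
    (Q : Ideal R) (hQ : Q = Ideal.span (Set.range a))
    (hQm : Q ≤ maximalIdeal R ^ 2) :
    LinearMap.ker (TensorProduct.lift ((LinearMap.mul R R).compl₁₂
        (maximalIdeal R).subtype Q.subtype))
      ≤ maximalIdeal R • (⊤ : Submodule R (↥(maximalIdeal R) ⊗[R] ↥Q)) ∧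
    mu R ↥(maximalIdeal R * Q) = d * mu R ↥(maximalIdeal R) := by
  subst hQ
  set m := maximalIdeal R
  have hweak := hreg.toIsWeaklyRegular
  refine ⟨fun t ht => ?_, ?_⟩
  · have hv : Submodule.span R (Set.range fun i => (⟨a i, Ideal.subset_span ⟨i, rfl⟩⟩ :
        Ideal.span (Set.range a))) = ⊤ := by
      convert Submodule.span_span_coe_preimage (R := R) (s := Set.range a)
      ext; simp [Subtype.ext_iff]
    obtain ⟨x, rfl⟩ := exists_eq_sum_tmul_of_span_eq_top hv t
    have hx : m.linearCombination a x = 0 := by simpa using ht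
    exact sum_mem fun i _ => Submodule.smul_top_le_comap_smul_top m ((mk R _ _).flip _)
      (Ideal.mem_smul_top_of_linearCombination_eq_zero hweak hQm hx i)
  · calc mu R ↥(m * Ideal.span (Set.range a))
        = (LinearMap.range (m.linearCombination a)).spanFinrank := by
          rw [mu_eq_spanFinrank_top, Submodule.spanFinrank_top, Ideal.range_linearCombination]
      _ = (⊤ : Submodule R (Fin d → m)).spanFinrank :=
          spanFinrank_range_eq_of_ker_le _
            (Ideal.ker_linearCombination_le_smul_top hweak hQm)
      _ = d * mu R m := by
          rw [spanFinrank_top_pi, Fintype.card_fin, mu_eq_spanFinrank_top]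

theorem mu_maximalIdeal_mul_parameter
    (R : Type) [CommRing R] [IsLocalRing R] [IsNoetherianRing R]
    (d : ℕ) (a : Fin d → R) (ha : ∀ i, a i ∈ maximalIdeal R)
    (hreg : RingTheory.Sequence.IsRegular R (List.ofFn a))
    (Q : Ideal R) (hQ : Q = Ideal.span (Set.range a))
    (hQm : Q ≤ maximalIdeal R ^ 2) :
    LinearMap.ker (TensorProduct.lift ((LinearMap.mul R R).compl₁₂
        (maximalIdeal R).subtype Q.subtype))
      ≤ maximalIdeal R • (⊤ : Submodule R (↥(maximalIdeal R) ⊗[R] ↥Q)) ∧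
    mu R ↥(maximalIdeal R * Q) = d * mu R ↥(maximalIdeal R) :=
  mu_maximalIdeal_mul_parameter_general R d a hreg Q hQ hQm
end

section
/- Let (R, m) be a regular local ring of dimension d ≥ 2 with infinite residue field and let Q = (x₁, …, x_{d−1}, x_d^q) for a regular system of parameters x₁, …, x_d and an integer q ≥ 1. Then Q : m = (x₁, …, x_{d−1}, x_d^{q−1}) when q ≥ 1 (interpreting x_d⁰ = 1). -/
open IsLocalRing TensorProduct

/-!
Write `J = (x₁, …, x_{d-1})` and `y = x_d`. The maximal ideal of `R ⧸ J` is generated by the image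
of `y`, which is not nilpotent: otherwise `𝔪` would be minimal over `J` and have height at most
`d - 1` by Krull's height theorem. Krull's intersection theorem then makes `y` a nonzerodivisor on
`R ⧸ J`, and `(J + (y^q)) : (J + (y)) = J + (y^{q-1})` is an elementary computation.
-/

namespace IsLocalRing

variable {R : Type*} [CommRing R] [IsLocalRing R] [IsNoetherianRing R]

theorem ringKrullDim_le_ncard_of_radical_span_eq_maximalIdeal {s : Set R} (hs : s.Finite)
    (h : (Ideal.span s).radical = maximalIdeal R) : ringKrullDim R ≤ s.ncard := by
  have hmin : maximalIdeal R ∈ (Ideal.span s).minimalPrimes := by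
    rw [← Ideal.radical_minimalPrimes, h, Ideal.minimalPrimes_eq_subsingleton_self]
    rfl
  rw [← maximalIdeal_height_eq_ringKrullDim]
  exact_mod_cast Ideal.height_le_card_of_mem_minimalPrimes_span hs hmin

theorem mem_nonZeroDivisors_of_maximalIdeal_eq_span_singleton {t : R}
    (ht : maximalIdeal R = Ideal.span {t}) (hnil : ¬IsNilpotent t) : t ∈ nonZeroDivisors R := by
  refine mem_nonZeroDivisors_iff_right.mpr fun c hc => ?_
  have hpow : ∀ n, c ∈ Ideal.span {t} ^ n := by
    intro n
    induction n with
    | zero => simp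
    | succ n ih =>
      obtain ⟨a, rfl⟩ := Ideal.mem_span_singleton'.mp (Ideal.span_singleton_pow t n ▸ ih)
      by_cases ha : IsUnit a
      · refine absurd ⟨n + 1, ?_⟩ hnil
        rw [pow_succ, ← ha.mul_right_eq_zero, ← mul_assoc, hc]
      · obtain ⟨b, rfl⟩ := Ideal.mem_span_singleton'.mp (ht ▸ (mem_maximalIdeal a).mpr ha)
        rw [Ideal.span_singleton_pow, Ideal.mem_span_singleton']
        exact ⟨b, by ring⟩
  have hne : Ideal.span {t} ≠ ⊤ := ht ▸ (maximalIdeal.isMaximal R).ne_top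
  simpa [Ideal.iInf_pow_eq_bot_of_isLocalRing _ hne] using Submodule.mem_iInf _ |>.mpr hpow

theorem quotient_mk_mem_nonZeroDivisors_of_maximalIdeal_eq_sup {s : Set R} (hs : s.Finite)
    (hcard : s.ncard < ringKrullDim R) {y : R}
    (hm : maximalIdeal R = Ideal.span s ⊔ Ideal.span {y}) :
    Ideal.Quotient.mk (Ideal.span s) y ∈ nonZeroDivisors (R ⧸ Ideal.span s) := by
  set J := Ideal.span s
  have hJm : J ≤ maximalIdeal R := hm ▸ le_sup_left
  have : Nontrivial (R ⧸ J) :=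
    Ideal.Quotient.nontrivial_iff.mpr (ne_top_of_le_ne_top (maximalIdeal.isMaximal R).ne_top hJm)
  have : IsLocalRing (R ⧸ J) := .of_surjective' _ Ideal.Quotient.mk_surjective
  refine mem_nonZeroDivisors_of_maximalIdeal_eq_span_singleton ?_ fun ⟨n, hn⟩ => ?_
  · rw [← map_maximalIdeal_of_surjective _ Ideal.Quotient.mk_surjective, hm, Ideal.map_sup,
      Ideal.map_quotient_self, bot_sup_eq, Ideal.map_span, Set.image_singleton]
  · have hrad : J.radical = maximalIdeal R := by
      refine le_antisymm ((maximalIdeal.isMaximal R).isPrime.radical_le_iff.mpr hJm) ?_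
      rw [hm, sup_le_iff, Ideal.span_singleton_le_iff_mem]
      refine ⟨Ideal.le_radical, n, ?_⟩
      rwa [← map_pow, Ideal.Quotient.eq_zero_iff_mem] at hn
    exact (ringKrullDim_le_ncard_of_radical_span_eq_maximalIdeal hs hrad).not_gt hcard

end IsLocalRing

theorem Ideal.colon_sup_span_singleton_pow_succ {R : Type*} [CommRing R] {J : Ideal R} {y : R}
    (hy : Ideal.Quotient.mk J y ∈ nonZeroDivisors (R ⧸ J)) (q : ℕ) :
    (J ⊔ Ideal.span {y ^ (q + 1)}).colon ((J ⊔ Ideal.span {y} : Ideal R) : Set R) =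
      J ⊔ Ideal.span {y ^ q} := by
  refine le_antisymm (fun f hf => ?_) (sup_le (fun j hj => ?_) ?_)
  · have hfy : f * y ∈ J ⊔ Ideal.span {y ^ (q + 1)} := by
      simpa [mul_comm] using
        Submodule.mem_colon.mp hf y (Ideal.mem_sup_right (Ideal.mem_span_singleton_self y))
    obtain ⟨j, hj, z, hz, hfy⟩ := Submodule.mem_sup.mp hfy
    obtain ⟨r, rfl⟩ := Ideal.mem_span_singleton'.mp hz
    have hdiff : f - r * y ^ q ∈ J := by
      rw [← Ideal.Quotient.eq_zero_iff_mem]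
      refine mem_nonZeroDivisors_iff_right.mp hy _ ?_
      rw [← map_mul, Ideal.Quotient.eq_zero_iff_mem, sub_mul, ← hfy]
      convert hj using 1
      ring
    rw [← sub_add_cancel f (r * y ^ q)]
    exact Submodule.add_mem_sup hdiff (Ideal.mul_mem_left _ r (Ideal.mem_span_singleton_self _))
  · exact Submodule.mem_colon.mpr fun s _ => Ideal.mem_sup_left (J.mul_mem_right s hj)
  · rw [Ideal.span_singleton_le_iff_mem, Submodule.mem_colon]
    rintro _ hs
    obtain ⟨j, hj, z, hz, rfl⟩ := Submodule.mem_sup.mp hs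
    obtain ⟨r, rfl⟩ := Ideal.mem_span_singleton'.mp hz
    rw [smul_eq_mul, mul_add, show y ^ q * (r * y) = r * y ^ (q + 1) by ring]
    exact Submodule.add_mem_sup (J.mul_mem_left _ hj)
      (Ideal.mul_mem_left _ r (Ideal.mem_span_singleton_self _))

theorem socle_of_integrally_closed_parameter
    (R : Type) [CommRing R] [IsLocalRing R] (hreg : IsRegularLocalRingP R)
    (d : ℕ) (hd : 2 ≤ d) (hdim : ringKrullDim R = (d : ℕ))
    (x : Fin d → R) (hx : maximalIdeal R = Ideal.span (Set.range x))
    (q : ℕ) (hq : 1 ≤ q)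
    (Q : Ideal R)
    (hQ : Q = Ideal.span ((x '' {j | (j : ℕ) < d - 1}) ∪ {x ⟨d - 1, by omega⟩ ^ q})) :
    Q.colon (maximalIdeal R)
      = Ideal.span ((x '' {j | (j : ℕ) < d - 1}) ∪ {x ⟨d - 1, by omega⟩ ^ (q - 1)}) := by
  have : IsNoetherianRing R := hreg.1
  set s := x '' {j | (j : ℕ) < d - 1}
  set y := x ⟨d - 1, by omega⟩
  have hrange : Set.range x = s ∪ {y} := by
    refine subset_antisymm ?_ (Set.union_subset (Set.image_subset_range _ _) (by simp [y]))
    rintro _ ⟨i, rfl⟩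
    by_cases hi : (i : ℕ) < d - 1
    · exact Or.inl ⟨i, hi, rfl⟩
    · exact Or.inr (congrArg x (Fin.ext (by dsimp; omega)))
  have hm : maximalIdeal R = Ideal.span s ⊔ Ideal.span {y} := by
    rw [hx, hrange, Ideal.span_union]
  have hcard : s.ncard < d := by
    have hlast : (⟨d - 1, by omega⟩ : Fin d) ∉ {j : Fin d | (j : ℕ) < d - 1} := by simp
    calc s.ncard ≤ {j : Fin d | (j : ℕ) < d - 1}.ncard := Set.ncard_image_le (Set.toFinite _)
      _ < (Set.univ : Set (Fin d)).ncard :=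
          Set.ncard_lt_ncard (Set.ssubset_univ_iff.mpr fun h => hlast (h ▸ Set.mem_univ _))
      _ = d := by simp
  have hy := IsLocalRing.quotient_mk_mem_nonZeroDivisors_of_maximalIdeal_eq_sup
    (Set.toFinite s) (by rw [hdim]; exact_mod_cast hcard) hm
  obtain ⟨q, rfl⟩ := Nat.exists_eq_add_of_le' hq
  rw [hQ, Ideal.span_union, Ideal.span_union, hm, Nat.add_sub_cancel]
  exact Ideal.colon_sup_span_singleton_pow_succ hy q
end
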